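/- arXiv:2505.15324 — 4 statements merged into one kernel-verified Lean document; each statement's English description precedes it below -/
import Mathlib

section
/- Let H be a 2-edge-connected subgraph of a 2-edge-connected graph G. Let S be a 2-edge-connected spanning subgraph of H and S' a 2-edge-connected spanning subgraph of G|H (the graph obtained by contracting V(H) to a single vertex). Then S ∪ S' (interpreting edges of S' as edges of G after decontraction) is a 2-edge-connected spanning subgraph of G. -/
/-- Reachability between vertices using only edges from the edge set `A`. -/
def EReach {V : Type*} (A : Set (Sym2 V)) : V → V → Prop :=
  Relation.ReflTransGen (fun a b => s(a, b) ∈ A ∧ a ≠ b)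

/-- The edge set `A` induces a 2-edge-connected graph with vertex set `W`:
all edges of `A` have both endpoints in `W`, all of `W` is connected via `A`,
and this remains so after deleting any single edge of `A`. -/
def TwoECOn {V : Type*} (A : Set (Sym2 V)) (W : Set V) : Prop :=
  (∀ e ∈ A, ∀ v ∈ e, v ∈ W) ∧
  (∀ x ∈ W, ∀ y ∈ W, EReach A x y) ∧
  (∀ e₀ ∈ A, ∀ x ∈ W, ∀ y ∈ W, EReach (A \ {e₀}) x y)

/-- Reachability using edges of `A` in the graph obtained by contracting the vertex set `W`
to a single vertex: any two vertices of `W` are identified. -/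
def EReachC {V : Type*} (A : Set (Sym2 V)) (W : Set V) : V → V → Prop :=
  Relation.ReflTransGen (fun a b => (s(a, b) ∈ A ∧ a ≠ b) ∨ (a ∈ W ∧ b ∈ W))

/-- The edge set `A` induces a 2-edge-connected spanning subgraph of the contraction `G|W`:
after identifying `W` to one vertex, all vertices are connected via `A`,
and this remains so after deleting any single edge of `A`. -/
def TwoECC {V : Type*} (A : Set (Sym2 V)) (W : Set V) : Prop :=
  (∀ x y, EReachC A W x y) ∧ ∀ e₀ ∈ A, ∀ x y, EReachC (A \ {e₀}) W x y

/-!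
A walk in the contraction `G|W` lifts to a walk in `G`: each jump between two vertices of `W`
is replaced by a path inside the connected graph `S`. Deleting a single edge `e₀` keeps both
`S` (connected on `W`) and `S'` (connected in `G|W`) connected, so the same lifting applies to
`(S ∪ S') - e₀`.
-/

open Set

lemma EReach.mono {V : Type*} {A B : Set (Sym2 V)} (h : A ⊆ B) {x y : V}
    (hr : EReach A x y) : EReach B x y :=
  Relation.ReflTransGen.mono (fun _ _ hab => ⟨h hab.1, hab.2⟩) _ _ hr

lemma EReachC.eReach {V : Type*} {A B C : Set (Sym2 V)} {W : Set V}
    (hAC : A ⊆ C) (hBC : B ⊆ C) (hB : ∀ u ∈ W, ∀ v ∈ W, EReach B u v) {x y : V}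
    (h : EReachC A W x y) : EReach C x y := by
  induction h with
  | refl => exact Relation.ReflTransGen.refl
  | tail _ step ih =>
    rcases step with ⟨hedge, hne⟩ | ⟨hu, hv⟩
    · exact ih.tail ⟨hAC hedge, hne⟩
    · exact ih.trans ((hB _ hu _ hv).mono hBC)

lemma TwoECOn.eReach_diff_singleton {V : Type*} {A : Set (Sym2 V)} {W : Set V}
    (h : TwoECOn A W) (e₀ : Sym2 V) : ∀ x ∈ W, ∀ y ∈ W, EReach (A \ {e₀}) x y := by
  by_cases he₀ : e₀ ∈ A
  · exact h.2.2 e₀ he₀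
  · rw [sdiff_singleton_eq_self he₀]
    exact h.2.1

lemma TwoECC.eReachC_diff_singleton {V : Type*} {A : Set (Sym2 V)} {W : Set V}
    (h : TwoECC A W) (e₀ : Sym2 V) (x y : V) : EReachC (A \ {e₀}) W x y := by
  by_cases he₀ : e₀ ∈ A
  · exact h.2 e₀ he₀ x y
  · rw [sdiff_singleton_eq_self he₀]
    exact h.1 x y

theorem stmt1_general {V : Type*} (G : SimpleGraph V) (W : Set V)
    (EH ES ES' : Set (Sym2 V))
    (hEH : EH ⊆ G.edgeSet)
    (hSH : ES ⊆ EH) (hS2 : TwoECOn ES W)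
    (hS' : ES' ⊆ G.edgeSet) (hS'2 : TwoECC ES' W) :
    ES ∪ ES' ⊆ G.edgeSet ∧ TwoECOn (ES ∪ ES') Set.univ := by
  refine ⟨union_subset (hSH.trans hEH) hS', fun _ _ _ _ => trivial, ?_, ?_⟩
  · intro x _ y _
    exact (hS'2.1 x y).eReach subset_union_right subset_union_left hS2.2.1
  · intro e₀ _ x _ y _
    exact (hS'2.eReachC_diff_singleton e₀ x y).eReach
      (sdiff_subset_sdiff_left subset_union_right) (sdiff_subset_sdiff_left subset_union_left)
      (hS2.eReach_diff_singleton e₀)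

/-- Let `H` (with edge set `EH` and vertex set `W`) be a 2-edge-connected subgraph of a
2-edge-connected graph `G`.  Let `S` (edge set `ES ⊆ EH`) be a 2-edge-connected spanning
subgraph of `H`, and let `S'` (edge set `ES'`, consisting of edges of `G`) be a
2-edge-connected spanning subgraph of the contraction `G|H`.  Then `S ∪ S'`, interpreting the
edges of `S'` as edges of `G` after decontraction, is a 2-edge-connected spanning subgraph
of `G`. -/
theorem stmt1 {V : Type*} (G : SimpleGraph V) (W : Set V)
    (EH ES ES' : Set (Sym2 V))
    (hG : TwoECOn G.edgeSet Set.univ)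
    (hEH : EH ⊆ G.edgeSet) (hHW : ∀ e ∈ EH, ∀ v ∈ e, v ∈ W)
    (hH2 : TwoECOn EH W)
    (hSH : ES ⊆ EH) (hS2 : TwoECOn ES W)
    (hS' : ES' ⊆ G.edgeSet) (hS'2 : TwoECC ES' W) :
    ES ∪ ES' ⊆ G.edgeSet ∧ TwoECOn (ES ∪ ES') Set.univ :=
  stmt1_general G W EH ES ES' hEH hSH hS2 hS' hS'2
end

section
/- In a graph whose components are vertex-disjoint paths, let V_leaf be the set of leaves (endpoints of paths), n_comp the number of paths, M a matching on V_leaf using only links between endpoints of different paths, and OPT a feasible augmenting set with opt = |OPT| such that M ⊆ OPT, M is maximal in OPT among such matchings, every leaf is incident to a link of OPT, every path has at least two OPT-links leaving it, and opt_bad denotes the number of links of OPT joining two endpoints of the same path. Then the number of leaves not covered by M is at most 4(opt − n_comp). -/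
private lemma sym2_rep {V : Type*} (e : Sym2 V) : ∃ a b, e = s(a, b) := by
  induction e using Sym2.ind with | _ a b => exact ⟨a, b, rfl⟩

/-- Leaf-matching counting lemma.  The forest `(V, E(𝒫))` consists of vertex-disjoint paths
(fibers of `pa`, with path-edge graph `Gp`, edges within fibers), each path having exactly
two leaves (vertices of degree 1); so there are `n_comp = |P|` paths.  `M ⊆ OPT` is a matching
using only links between leaves of different paths, maximal in `OPT` among such matchings;
every leaf is incident to a link of `OPT`, and every path has at least two `OPT`-links
leaving it.  Then the number of leaves not covered by `M` is at most `4(opt − n_comp)`. -/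
theorem stmt9 {V P : Type*} [Fintype V] [Fintype P]
    (pa : V → P) (Gp : SimpleGraph V)
    (hwithin : ∀ a b, Gp.Adj a b → pa a = pa b)
    (hleaves : ∀ p : P, {v | pa v = p ∧ (Gp.neighborSet v).ncard = 1}.ncard = 2)
    (OPT M : Set (Sym2 V)) (hMO : M ⊆ OPT)
    (hMmatch : M.Pairwise fun e f => ∀ x, x ∈ e → x ∉ f)
    (hMleaf : ∀ e ∈ M, ∃ a b, e = s(a, b) ∧
      (Gp.neighborSet a).ncard = 1 ∧ (Gp.neighborSet b).ncard = 1 ∧ pa a ≠ pa b)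
    (hMmax : ∀ e ∈ OPT, (∃ a b, e = s(a, b) ∧
        (Gp.neighborSet a).ncard = 1 ∧ (Gp.neighborSet b).ncard = 1 ∧ pa a ≠ pa b) →
      e ∈ M ∨ ∃ f ∈ M, ∃ x, x ∈ e ∧ x ∈ f)
    (hleafcov : ∀ v, (Gp.neighborSet v).ncard = 1 → ∃ e ∈ OPT, v ∈ e)
    (hout : ∀ p : P, 2 ≤ {e ∈ OPT | ∃ a b, e = s(a, b) ∧ pa a = p ∧ pa b ≠ p}.ncard) :
    {v | (Gp.neighborSet v).ncard = 1 ∧ ∀ e ∈ M, v ∉ e}.ncard ≤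
      4 * (OPT.ncard - Fintype.card P) := by
  classical
  set leaf : V → Prop := fun v => (Gp.neighborSet v).ncard = 1 with hleafdef
  set MF : Finset (Sym2 V) := M.toFinset with hMF
  set OF : Finset (Sym2 V) := OPT.toFinset with hOF
  set LF : Finset V := Finset.univ.filter (fun v => leaf v) with hLF
  set UF : Finset V := Finset.univ.filter (fun v => leaf v ∧ ∀ e ∈ M, v ∉ e) with hUF
  set CF : Finset V := Finset.univ.filter (fun v => ∃ e ∈ M, v ∈ e) with hCF
  set n : ℕ := Fintype.card P with hn
  have memMF : ∀ e, e ∈ MF ↔ e ∈ M := fun e => Set.mem_toFinset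
  have memOF : ∀ e, e ∈ OF ↔ e ∈ OPT := fun e => Set.mem_toFinset
  -- Step A : LF.card = 2 * n
  have stepA : LF.card = 2 * n := by
    have h1 : LF.card = ∑ p : P, (LF.filter (fun v => pa v = p)).card :=
      Finset.card_eq_sum_card_fiberwise (fun v _ => Finset.mem_univ (pa v))
    have h2 : ∀ p : P, (LF.filter (fun v => pa v = p)).card = 2 := by
      intro p
      have := hleaves p
      rw [Set.ncard_eq_toFinset_card'] at this
      rw [← this]
      congr 1
      ext v
      simp only [hLF, Finset.mem_filter, Finset.mem_univ, true_and, Set.mem_toFinset,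
        Set.mem_setOf_eq, hleafdef]
      tauto
    rw [h1, Finset.sum_congr rfl (fun p _ => h2 p)]
    simp [hn, Finset.card_univ, mul_comm]
  -- Step B1 : CF.card = 2 * MF.card
  have stepB1 : CF.card = 2 * MF.card := by
    have hCFeq : CF = MF.biUnion (fun e => Finset.univ.filter (fun v => v ∈ e)) := by
      ext v
      simp only [hCF, Finset.mem_filter, Finset.mem_univ, true_and, Finset.mem_biUnion, memMF]
    rw [hCFeq, Finset.card_biUnion]
    · have : ∀ e ∈ MF, (Finset.univ.filter (fun v => v ∈ e)).card = 2 := by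
        intro e he
        obtain ⟨a, b, rfl, _, _, hab⟩ := hMleaf e ((memMF e).1 he)
        have hne : a ≠ b := fun h => hab (by rw [h])
        have : (Finset.univ.filter (fun v => v ∈ s(a, b))) = {a, b} := by
          ext v; simp [Sym2.mem_iff]
        rw [this, Finset.card_insert_of_notMem (by simpa using hne), Finset.card_singleton]
      rw [Finset.sum_congr rfl this]
      simp [mul_comm]
    · intro e he f hf hef
      have hd := hMmatch ((memMF e).1 he) ((memMF f).1 hf) hef
      simp only [Finset.disjoint_left, Finset.mem_filter, Finset.mem_univ, true_and]
      intro x hxe hxf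
      exact hd x hxe hxf
  -- Step B2 : LF.card = CF.card + UF.card
  have stepB2 : LF.card = CF.card + UF.card := by
    rw [← Finset.card_union_of_disjoint]
    · congr 1
      ext v
      simp only [hLF, hCF, hUF, Finset.mem_union, Finset.mem_filter, Finset.mem_univ, true_and]
      constructor
      · intro hl
        by_cases hc : ∃ e ∈ M, v ∈ e
        · exact Or.inl hc
        · push_neg at hc
          exact Or.inr ⟨hl, hc⟩
      · rintro (⟨e, he, hv⟩ | ⟨hl, _⟩)
        · obtain ⟨a, b, rfl, ha, hb, _⟩ := hMleaf e he
          rcases Sym2.mem_iff.1 hv with rfl | rfl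
          · exact ha
          · exact hb
        · exact hl
    · simp only [Finset.disjoint_left, hCF, hUF, Finset.mem_filter, Finset.mem_univ, true_and]
      rintro v ⟨e, he, hv⟩ ⟨_, hu⟩
      exact hu e he hv
  -- good/bad edges
  set GdF : Finset (Sym2 V) := OF.filter (fun e => ∃ a b, e = s(a, b) ∧ pa a ≠ pa b) with hGdF
  set BadF : Finset (Sym2 V) := OF.filter (fun e => ¬ ∃ a b, e = s(a, b) ∧ pa a ≠ pa b) with hBadF
  have stepC0 : GdF.card + BadF.card = OF.card := Finset.card_filter_add_card_filter_not _
  -- Step C : n ≤ GdF.card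
  have stepC : n ≤ GdF.card := by
    set SF : P → Finset (Sym2 V) :=
      fun p => OF.filter (fun e => ∃ a b, e = s(a, b) ∧ pa a = p ∧ pa b ≠ p) with hSF
    have hSsub : ∀ p, SF p ⊆ GdF := by
      intro p e he
      simp only [hSF, Finset.mem_filter] at he
      obtain ⟨heO, a, b, rfl, h1, h2⟩ := he
      exact Finset.mem_filter.2 ⟨heO, a, b, rfl, by rw [h1]; exact fun h => h2 h.symm⟩
    have h2n : 2 * n ≤ ∑ p : P, (SF p).card := by
      have : ∀ p : P, 2 ≤ (SF p).card := by
        intro p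
        have := hout p
        rw [Set.ncard_eq_toFinset_card'] at this
        convert this using 2
        ext e
        simp [hSF, memOF, Set.mem_toFinset, Set.mem_setOf_eq]
      calc 2 * n = ∑ _p : P, 2 := by simp [hn, mul_comm]
        _ ≤ ∑ p : P, (SF p).card := Finset.sum_le_sum (fun p _ => this p)
    have hswap : ∑ p : P, (SF p).card
        = ∑ e ∈ GdF, (Finset.univ.filter (fun p => e ∈ SF p)).card := by
      have h1 : ∀ p : P, (SF p).card = ∑ e ∈ GdF, if e ∈ SF p then 1 else 0 := by
        intro p
        rw [← Finset.card_filter, Finset.filter_mem_eq_inter,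
          Finset.inter_eq_right.2 (hSsub p)]
      rw [Finset.sum_congr rfl (fun p _ => h1 p), Finset.sum_comm]
      congr 1
      ext e
      rw [Finset.card_filter]
    have hbound : ∀ e ∈ GdF, (Finset.univ.filter (fun p => e ∈ SF p)).card ≤ 2 := by
      intro e he
      obtain ⟨a, b, rfl⟩ := sym2_rep e
      have : (Finset.univ.filter (fun p => s(a, b) ∈ SF p)) ⊆ {pa a, pa b} := by
        intro p hp
        simp only [Finset.mem_filter, hSF] at hp
        obtain ⟨_, ⟨_, a', b', hab, h1, h2⟩⟩ := hp
        rcases Sym2.eq_iff.1 hab with ⟨ha, hb⟩ | ⟨ha, hb⟩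
        · subst ha; simp only [Finset.mem_insert, Finset.mem_singleton]
          exact Or.inl h1.symm
        · subst hb; simp only [Finset.mem_insert, Finset.mem_singleton]
          exact Or.inr h1.symm
      calc (Finset.univ.filter (fun p => s(a, b) ∈ SF p)).card ≤ ({pa a, pa b} : Finset P).card :=
            Finset.card_le_card this
        _ ≤ 2 := Finset.card_insert_le _ _ |>.trans (by simp)
    have : 2 * n ≤ 2 * GdF.card := by
      calc 2 * n ≤ ∑ p : P, (SF p).card := h2n
        _ = ∑ e ∈ GdF, (Finset.univ.filter (fun p => e ∈ SF p)).card := hswap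
        _ ≤ ∑ _e ∈ GdF, 2 := Finset.sum_le_sum hbound
        _ = 2 * GdF.card := by simp [mul_comm]
    omega
  -- Step D : UF.card ≤ (OF.card - MF.card) + BadF.card, via a choice function
  have hex : ∀ v : V, ∃ e : Sym2 V, v ∈ UF → e ∈ OPT ∧ v ∈ e ∧ e ∉ M := by
    intro v
    by_cases hv : v ∈ UF
    · have hvl : leaf v := (Finset.mem_filter.1 hv).2.1
      obtain ⟨e, he, hve⟩ := hleafcov v hvl
      exact ⟨e, fun _ => ⟨he, hve, fun hm => (Finset.mem_filter.1 hv).2.2 e hm hve⟩⟩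
    · exact ⟨s(v, v), fun h => absurd h hv⟩
  choose φ hφ using hex
  set TF : Finset (Sym2 V) := UF.image φ with hTF
  have hTsub : ∀ e ∈ TF, e ∈ OPT ∧ e ∉ M := by
    intro e he
    obtain ⟨v, hv, rfl⟩ := Finset.mem_image.1 he
    exact ⟨(hφ v hv).1, (hφ v hv).2.2⟩
  have stepD1 : TF.card + MF.card ≤ OF.card := by
    rw [← Finset.card_union_of_disjoint]
    · apply Finset.card_le_card
      intro e he
      rcases Finset.mem_union.1 he with h | h
      · exact (memOF e).2 (hTsub e h).1
      · exact (memOF e).2 (hMO ((memMF e).1 h))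
    · simp only [Finset.disjoint_left]
      intro e he hm
      exact (hTsub e he).2 ((memMF e).1 hm)
  have stepD2 : UF.card ≤ TF.card + BadF.card := by
    have hfib : UF.card = ∑ e ∈ TF, (UF.filter (fun v => φ v = e)).card :=
      Finset.card_eq_sum_card_fiberwise (fun v hv => Finset.mem_image_of_mem φ hv)
    have hbound : ∀ e ∈ TF, (UF.filter (fun v => φ v = e)).card
        ≤ if e ∈ BadF then 2 else 1 := by
      intro e he
      obtain ⟨a, b, rfl⟩ := sym2_rep e
      have hsub : UF.filter (fun v => φ v = s(a, b)) ⊆ {a, b} := by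
        intro v hv
        have h1 := Finset.mem_filter.1 hv
        have h2 := (hφ v h1.1).2.1
        rw [h1.2] at h2
        simpa [Sym2.mem_iff] using h2
      have hle2 : (UF.filter (fun v => φ v = s(a, b))).card ≤ 2 :=
        (Finset.card_le_card hsub).trans ((Finset.card_insert_le _ _).trans (by simp))
      by_cases hbad : s(a, b) ∈ BadF
      · simp [hbad, hle2]
      · simp only [hbad, if_false]
        by_contra hc
        push_neg at hc
        -- fiber has 2 elements, so equals {a,b} with a ≠ b
        have h2 : (UF.filter (fun v => φ v = s(a, b))).card = 2 := le_antisymm hle2 hc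
        have hne : a ≠ b := by
          rintro rfl
          have hc1 : ({a, a} : Finset V).card ≤ 1 := by simp
          have := (Finset.card_le_card hsub).trans hc1
          omega
        have heq : UF.filter (fun v => φ v = s(a, b)) = {a, b} := by
          apply Finset.eq_of_subset_of_card_le hsub
          rw [h2, Finset.card_insert_of_notMem (by simpa using hne), Finset.card_singleton]
        have haU : a ∈ UF := (Finset.mem_filter.1 (heq ▸ (by simp : a ∈ ({a, b} : Finset V)))).1
        have hbU : b ∈ UF := (Finset.mem_filter.1 (heq ▸ (by simp : b ∈ ({a, b} : Finset V)))).1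
        have haU' := Finset.mem_filter.1 haU
        have hbU' := Finset.mem_filter.1 hbU
        have heO : s(a, b) ∈ OPT := by
          have : a ∈ UF.filter (fun v => φ v = s(a, b)) := heq ▸ (by simp)
          have h := Finset.mem_filter.1 this
          exact h.2 ▸ (hφ a h.1).1
        -- not bad means good pa a ≠ pa b would contradict maximality
        have hpa : pa a = pa b := by
          by_contra hpab
          rcases hMmax s(a, b) heO ⟨a, b, rfl, haU'.2.1, hbU'.2.1, hpab⟩ with hm | ⟨f, hf, x, hxe, hxf⟩
          · have : a ∈ UF.filter (fun v => φ v = s(a, b)) := heq ▸ (by simp)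
            have h := Finset.mem_filter.1 this
            exact ((hφ a h.1).2.2) (h.2 ▸ hm)
          · rcases Sym2.mem_iff.1 hxe with rfl | rfl
            · exact haU'.2.2 f hf hxf
            · exact hbU'.2.2 f hf hxf
        apply hbad
        rw [hBadF, Finset.mem_filter]
        refine ⟨(memOF _).2 heO, ?_⟩
        rintro ⟨x, y, hxy, hpaxy⟩
        rcases Sym2.eq_iff.1 hxy.symm with ⟨rfl, rfl⟩ | ⟨rfl, rfl⟩
        · exact hpaxy hpa
        · exact hpaxy hpa.symm
    have hsum : ∑ e ∈ TF, (if e ∈ BadF then 2 else 1)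
        ≤ TF.card + BadF.card := by
      have heq : ∀ e ∈ TF, (if e ∈ BadF then 2 else 1) = 1 + (if e ∈ BadF then 1 else 0) := by
        intro e _
        by_cases h : e ∈ BadF <;> simp [h]
      rw [Finset.sum_congr rfl heq, Finset.sum_add_distrib, ← Finset.card_filter]
      simp only [Finset.sum_const, smul_eq_mul, mul_one]
      have hst : (TF.filter (fun e => e ∈ BadF)).card ≤ BadF.card :=
        Finset.card_le_card (fun e he => (Finset.mem_filter.1 he).2)
      omega
    calc UF.card = ∑ e ∈ TF, (UF.filter (fun v => φ v = e)).card := hfib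
      _ ≤ ∑ e ∈ TF, (if e ∈ BadF then 2 else 1) := Finset.sum_le_sum hbound
      _ ≤ TF.card + BadF.card := hsum
  -- Final arithmetic
  have hUcard : {v | (Gp.neighborSet v).ncard = 1 ∧ ∀ e ∈ M, v ∉ e}.ncard = UF.card := by
    rw [Set.ncard_eq_toFinset_card']
    congr 1
    ext v
    simp only [Set.mem_toFinset, Set.mem_setOf_eq, hUF, Finset.mem_filter, Finset.mem_univ,
      true_and, hleafdef]
  have hOcard : OPT.ncard = OF.card := Set.ncard_eq_toFinset_card' _
  rw [hUcard, hOcard]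
  omega
end

section
/- Let H be a spanning subgraph of G consisting of k ≥ 2 pairwise vertex-disjoint 2-edge-connected components C_1,...,C_k, and let K be a set of k edges of G forming a cycle in the graph obtained by contracting each C_i to a single vertex, visiting each contracted vertex exactly once. Then H ∪ K is connected on V(C_1) ∪ ... ∪ V(C_k) and is 2-edge-connected (restricted to these vertices). -/
/-- A graph is 2-edge-connected if it is connected and remains connected after the removal of
any single edge. -/
def TwoEC {V : Type*} (G : SimpleGraph V) : Prop :=
  G.Connected ∧ ∀ e ∈ G.edgeSet, (G.deleteEdges {e}).Connected

section Aux

variable {V : Type*} {k : ℕ}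

/-- Core connectivity lemma: if each induced piece `D.induce (W i)` is connected and all the
cycle edges except possibly those at index `j` are present in `D`, then `D.induce (⋃ i, W i)`
is connected. -/
private lemma core_connected (hk : 2 ≤ k) (W : ZMod k → Set V) (D : SimpleGraph V)
    (x y : ZMod k → V) (hx : ∀ i, x i ∈ W i) (hy : ∀ i, y i ∈ W (i + 1))
    (hcomp : ∀ i, (D.induce (W i)).Connected)
    (j : ZMod k) (hedge : ∀ i, i ≠ j → D.Adj (x i) (y i)) :
    (D.induce (⋃ i, W i)).Connected := by
  haveI : NeZero k := ⟨by omega⟩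
  set S : Set V := ⋃ i, W i with hS
  have hmem : ∀ i v, v ∈ W i → v ∈ S := fun i v h => Set.mem_iUnion.2 ⟨i, h⟩
  -- reachability inside a piece transports to the big induced graph
  have hreach : ∀ (i : ZMod k) u v (hu : u ∈ W i) (hv : v ∈ W i),
      (D.induce S).Reachable ⟨u, hmem i u hu⟩ ⟨v, hmem i v hv⟩ := by
    intro i u v hu hv
    obtain ⟨w⟩ := (hcomp i).preconnected ⟨u, hu⟩ ⟨v, hv⟩
    let f : D.induce (W i) →g D.induce S :=
      ⟨fun a => ⟨a.1, hmem i a.1 a.2⟩, fun h => h⟩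
    exact ⟨w.map f⟩
  -- every vertex of W (j+1+n) reaches x (j+1)
  have key : ∀ n : ℕ, n < k → ∀ v (hv : v ∈ W (j + 1 + (n : ZMod k))),
      (D.induce S).Reachable ⟨v, hmem _ v hv⟩ ⟨x (j+1), hmem _ _ (hx (j+1))⟩ := by
    intro n
    induction n with
    | zero =>
      intro _ v hv
      have hv' : v ∈ W (j + 1) := by simpa using hv
      exact hreach (j+1) v (x (j+1)) hv' (hx (j+1))
    | succ n ih =>
      intro hn v hv
      have hne : ((n + 1 : ℕ) : ZMod k) ≠ 0 := by
        rw [Ne, ZMod.natCast_eq_zero_iff]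
        intro hdvd
        have := Nat.le_of_dvd (by omega) hdvd
        omega
      have hij : j + 1 + (n : ZMod k) ≠ j := by
        intro h
        apply hne
        push_cast
        linear_combination h
      -- y (j+1+n) lies in W (j+1+(n+1))
      have hyv : y (j + 1 + (n : ZMod k)) ∈ W (j + 1 + ((n + 1 : ℕ) : ZMod k)) := by
        have := hy (j + 1 + (n : ZMod k))
        have he : j + 1 + (n : ZMod k) + 1 = j + 1 + ((n + 1 : ℕ) : ZMod k) := by
          push_cast; ring
        rwa [he] at this
      have hadj : (D.induce S).Adj
          ⟨y (j + 1 + (n : ZMod k)), hmem _ _ hyv⟩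
          ⟨x (j + 1 + (n : ZMod k)), hmem _ _ (hx _)⟩ :=
        (hedge _ hij).symm
      have r1 := hreach _ v (y (j + 1 + (n : ZMod k))) hv hyv
      have r2 := ih (by omega) (x (j + 1 + (n : ZMod k))) (hx _)
      exact r1.trans (hadj.reachable.trans r2)
  rw [SimpleGraph.connected_iff]
  refine ⟨?_, ⟨⟨x 0, hmem 0 _ (hx 0)⟩⟩⟩
  rintro ⟨u, hu⟩ ⟨v, hv⟩
  have reach_base : ∀ u (hu : u ∈ S),
      (D.induce S).Reachable ⟨u, hu⟩ ⟨x (j+1), hmem _ _ (hx (j+1))⟩ := by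
    intro u hu
    obtain ⟨i, hi⟩ := Set.mem_iUnion.1 hu
    have hi' : u ∈ W (j + 1 + (((i - (j+1)).val : ℕ) : ZMod k)) := by
      have : ((( (i - (j+1)).val : ℕ)) : ZMod k) = i - (j+1) :=
        (ZMod.natCast_val _).trans (ZMod.cast_id _ _)
      rw [this]
      simpa using hi
    exact key ((i - (j+1)).val) (ZMod.val_lt _) u hi'
  exact (reach_base u hu).trans (reach_base v hv).symm

end Aux

/-- Gluing along a good cycle of the component graph.  `H` consists of `k ≥ 2` pairwise
vertex-disjoint 2-edge-connected components with vertex sets `W 0, …, W (k−1)`, and `K` is a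
set of `k` (distinct) edges `s(x i, y i)` with `x i ∈ W i` and `y i ∈ W (i+1)`, i.e. `K` forms
a cycle in the graph obtained by contracting each component to a single vertex, visiting each
contracted vertex exactly once.  Then `H ∪ K` restricted to `V(C_1) ∪ … ∪ V(C_k)` is connected
and 2-edge-connected. -/
theorem stmt11 {V : Type*} [DecidableEq V] {k : ℕ} (hk : 2 ≤ k)
    (W : ZMod k → Set V) (H : SimpleGraph V)
    (hdisj : ∀ i j : ZMod k, i ≠ j → Disjoint (W i) (W j))
    (hwithin : ∀ a b, H.Adj a b → ∃ i, a ∈ W i ∧ b ∈ W i)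
    (h2ec : ∀ i, TwoEC (H.induce (W i)))
    (x y : ZMod k → V)
    (hx : ∀ i, x i ∈ W i) (hy : ∀ i, y i ∈ W (i + 1))
    (hK : ∀ i j, s(x i, y i) = s(x j, y j) → i = j) :
    ((H ⊔ SimpleGraph.fromEdgeSet {e | ∃ i, e = s(x i, y i)}).induce
        (⋃ i, W i)).Connected ∧
    TwoEC ((H ⊔ SimpleGraph.fromEdgeSet {e | ∃ i, e = s(x i, y i)}).induce (⋃ i, W i)) := by
  haveI : NeZero k := ⟨by omega⟩
  set G1 : SimpleGraph V := H ⊔ SimpleGraph.fromEdgeSet {e | ∃ i, e = s(x i, y i)} with hG1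
  set S : Set V := ⋃ i, W i with hS
  -- basic facts
  have hone : (1 : ZMod k) ≠ 0 := by
    have : ((1 : ℕ) : ZMod k) ≠ 0 := by
      rw [Ne, ZMod.natCast_eq_zero_iff]
      intro hdvd; have := Nat.le_of_dvd (by omega) hdvd; omega
    simpa using this
  have hmemW : ∀ {a : V} {i i' : ZMod k}, a ∈ W i → a ∈ W i' → i = i' := by
    intro a i i' h h'
    by_contra hne
    exact Set.disjoint_left.1 (hdisj i i' hne) h h'
  -- no cycle edge lies within a single component
  have hKnotin : ∀ (i' : ZMod k) (a b : V) (i : ZMod k), a ∈ W i → b ∈ W i →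
      s(a, b) ≠ s(x i', y i') := by
    intro i' a b i ha hb h
    rw [Sym2.eq_iff] at h
    have hx' : x i' ∈ W i := by
      rcases h with ⟨h1, h2⟩ | ⟨h1, h2⟩
      · exact h1 ▸ ha
      · exact h2 ▸ hb
    have hy' : y i' ∈ W i := by
      rcases h with ⟨h1, h2⟩ | ⟨h1, h2⟩
      · exact h2 ▸ hb
      · exact h1 ▸ ha
    have e1 : i' = i := hmemW (hx i') hx'
    have e2 : i' + 1 = i := hmemW (hy i') hy'
    apply hone
    have : i' + 1 = i' := e2.trans e1.symm
    linear_combination this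
  have hxyne : ∀ i, x i ≠ y i := by
    intro i h
    have : i = i + 1 := hmemW (h ▸ hx i) (hy i)
    exact hone (by linear_combination this.symm)
  -- within a component, G1 agrees with H (after any deletions avoiding the component)
  have hinduce : ∀ (E : Set (Sym2 V)) (i : ZMod k),
      (∀ a b : V, a ∈ W i → b ∈ W i → s(a, b) ∉ E) →
      (G1.deleteEdges E).induce (W i) = H.induce (W i) := by
    intro E i hE
    ext a b
    simp only [SimpleGraph.comap_adj, SimpleGraph.deleteEdges_adj, hG1,
      SimpleGraph.sup_adj, SimpleGraph.fromEdgeSet_adj, Set.mem_setOf_eq]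
    constructor
    · rintro ⟨hadj | ⟨⟨i', hi'⟩, hne⟩, _⟩
      · exact hadj
      · exact absurd hi' (hKnotin i' a b i a.2 b.2)
    · intro hadj
      exact ⟨Or.inl hadj, hE _ _ a.2 b.2⟩
  -- the core connectivity, parametrized
  have main : ∀ (E : Set (Sym2 V)),
      (∀ i, ((G1.deleteEdges E).induce (W i)).Connected) →
      (∃ j : ZMod k, ∀ i, i ≠ j → s(x i, y i) ∉ E) →
      ((G1.deleteEdges E).induce S).Connected := by
    rintro E hcomp ⟨j, hj⟩
    refine core_connected hk W _ x y hx hy hcomp j ?_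
    intro i hij
    rw [SimpleGraph.deleteEdges_adj]
    refine ⟨Or.inr ?_, hj i hij⟩
    exact ⟨⟨i, rfl⟩, hxyne i⟩
  -- connectivity of the whole thing (no deletion)
  have hconn : (G1.induce S).Connected := by
    have := main ∅ (fun i => by
      rw [hinduce ∅ i (fun a b _ _ => Set.notMem_empty _)]
      exact (h2ec i).1) ⟨0, fun i _ => Set.notMem_empty _⟩
    simpa using this
  refine ⟨hconn, hconn, ?_⟩
  -- 2-edge-connectivity: delete any edge
  intro e he
  -- rewrite the deletion of an edge of the induced graph as induced graph of deletion
  have hrw : ∀ e : Sym2 ↥S, (G1.induce S).deleteEdges {e} =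
      (G1.deleteEdges {Sym2.map Subtype.val e}).induce S := by
    intro e
    ext a b
    simp only [SimpleGraph.deleteEdges_adj, SimpleGraph.comap_adj, Set.mem_singleton_iff]
    constructor
    · rintro ⟨hadj, hne⟩
      refine ⟨hadj, fun h => hne ?_⟩
      have : Sym2.map Subtype.val s(a, b) = Sym2.map Subtype.val e := by simpa using h
      exact Sym2.map.injective Subtype.val_injective this
    · rintro ⟨hadj, hne⟩
      refine ⟨hadj, fun h => hne ?_⟩
      subst h; simp
  rw [hrw e]
  induction e using Sym2.ind with
  | _ a b =>
  rw [SimpleGraph.mem_edgeSet] at he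
  have hG1adj : G1.Adj a.1 b.1 := he
  have hemap : Sym2.map Subtype.val s(a, b) = s(a.1, b.1) := by simp
  rw [hemap]
  set e0 : Sym2 V := s(a.1, b.1) with he0
  rw [hG1, SimpleGraph.sup_adj] at hG1adj
  rcases hG1adj with hH | hFrom
  · -- case: an edge of H, within some component m
    obtain ⟨m, ham, hbm⟩ := hwithin a.1 b.1 hH
    apply main {e0}
    · intro i
      by_cases him : i = m
      · subst him
        have : (G1.deleteEdges {e0}).induce (W i) =
            (H.induce (W i)).deleteEdges {s(⟨a.1, ham⟩, (⟨b.1, hbm⟩ : W i))} := by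
          ext c d
          simp only [SimpleGraph.comap_adj, SimpleGraph.deleteEdges_adj, hG1,
            SimpleGraph.sup_adj, SimpleGraph.fromEdgeSet_adj, Set.mem_setOf_eq,
            Set.mem_singleton_iff]
          constructor
          · rintro ⟨hadj' | ⟨⟨i', hi'⟩, hne⟩, hne0⟩
            · refine ⟨hadj', fun h => hne0 ?_⟩
              have := congrArg (Sym2.map Subtype.val) h
              simpa [he0] using this
            · exact absurd hi' (hKnotin i' _ _ i c.2 d.2)
          · rintro ⟨hadj', hne⟩
            refine ⟨Or.inl hadj', fun h => hne ?_⟩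
            rw [he0] at h
            have : Sym2.map Subtype.val s(c, d) =
                Sym2.map Subtype.val s((⟨a.1, ham⟩ : W i), (⟨b.1, hbm⟩ : W i)) := by
              simpa using h
            exact Sym2.map.injective Subtype.val_injective this
        rw [this]
        apply (h2ec i).2
        rw [SimpleGraph.mem_edgeSet]
        exact hH
      · rw [hinduce {e0} i]
        · exact (h2ec i).1
        · intro c d hc hd hmem
          rw [Set.mem_singleton_iff, he0] at hmem
          have : a.1 ∈ W i ∨ b.1 ∈ W i := by
            rw [Sym2.eq_iff] at hmem
            rcases hmem with ⟨h1, _⟩ | ⟨_, h2⟩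
            · exact Or.inl (h1 ▸ hc)
            · exact Or.inl (h2 ▸ hd)
          rcases this with h | h
          · exact him (hmemW h ham)
          · exact him (hmemW h hbm)
    · refine ⟨0, fun i _ hmem => ?_⟩
      rw [Set.mem_singleton_iff] at hmem
      exact hKnotin i a.1 b.1 m ham hbm hmem.symm
  · -- case: a cycle edge
    obtain ⟨⟨j, hj⟩, hne⟩ := hFrom
    rw [hj] at he0
    apply main {e0}
    · intro i
      rw [hinduce {e0} i]
      · exact (h2ec i).1
      · intro c d hc hd hmem
        rw [Set.mem_singleton_iff, he0] at hmem
        exact hKnotin j c d i hc hd hmem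
    · refine ⟨j, fun i hij hmem => ?_⟩
      rw [Set.mem_singleton_iff, he0] at hmem
      exact hij (hK i j hmem)
end

section
/- The function f(δ) = min{δ + 1 + ln(2 − δ), 7/4 + (10/4)(1 − δ)} over δ ∈ [0,1] attains maximum value at most 1.9955; in particular for all δ ∈ [0,1], min{δ + 1 + ln(2 − δ), 7/4 + 2.5(1 − δ)} ≤ 1.9955. -/
lemma log_1_0982_le : Real.log 1.0982 ≤ 0.0937 := by
  rw [Real.log_le_iff_le_exp (by norm_num)]
  refine le_trans ?_ (Real.sum_le_exp_of_nonneg (by norm_num : (0:ℝ) ≤ 0.0937) 4)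
  simp [Finset.sum_range_succ, Nat.factorial]
  norm_num

/-- Balancing computation for the FAP approximation ratio: for all `δ ∈ [0,1]`,
`min (δ + 1 + ln(2 − δ)) (7/4 + (10/4)(1 − δ)) ≤ 1.9955`. -/
theorem stmt14 (δ : ℝ) (h0 : 0 ≤ δ) (h1 : δ ≤ 1) :
    min (δ + 1 + Real.log (2 - δ)) (7 / 4 + (10 / 4) * (1 - δ)) ≤ 1.9955 := by
  rcases le_or_gt δ 0.9018 with h | h
  · refine le_trans (min_le_left _ _) ?_
    have h2 : (0:ℝ) < (2 - δ) / 1.0982 := div_pos (by linarith) (by norm_num)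
    have hl := Real.log_le_sub_one_of_pos h2
    rw [Real.log_div (by linarith) (by norm_num)] at hl
    have e : (2 - δ) / 1.0982 = (2 - δ) * (5000 / 5491) := by
      rw [div_eq_mul_inv]; norm_num
    rw [e] at hl
    have := log_1_0982_le
    nlinarith
  · refine le_trans (min_le_right _ _) ?_
    linarith
end
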